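/- Let E be a real normed vector space, K' a natural number, and for each k ∈ {1, …, K'} let α_k ∈ (0,1), β_k = 1 − α_k, and ᾱ_k = ∏_{s=1}^{k} α_s (so ᾱ_k ∈ (0,1)). Let ε_θ(·, k) : E → E be L-Lipschitz for every k, and define the posterior-mean map μ_k(A) = (1/√α_k) · (A − (β_k/√(1−ᾱ_k)) · ε_θ(A, k)). Set c_k = (√(1−ᾱ_k) + β_k·L) / √(α_k·(1−ᾱ_k)). Suppose two reverse chains are run with the same noise realizations: Ã_{k−1} = μ_k(Ã_k) + σ_k·Y_k and A_{k−1} = μ_k(A_k) + σ_k·Y_k for k = K', …, 1, where σ_k ∈ ℝ and Y_k ∈ E are identical in both chains. Then ‖Ã_0 − A_0‖ ≤ (∏_{k=1}^{K'} c_k) · ‖Ã_{K'} − A_{K'}‖. -/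

import Mathlib

/-!
Coupling the two chains through the same noise makes the noise cancel in each step, so
`Ã_{k-1} - A_{k-1} = μ_k(Ã_k) - μ_k(A_k)`. Each posterior-mean map is Lipschitz with
constant `c_k`: the identity part contributes `1`, the Lipschitz denoiser contributes
`β_k L / √(1 - ᾱ_k)`, and both are scaled by `1 / √α_k`. Composing the `K'` steps multiplies
the constants.
-/

open Finset

theorem nonneg_of_forall_norm_sub_le_mul {E F : Type*} [NormedAddCommGroup E] [Nontrivial E]
    [SeminormedAddCommGroup F] {f : E → F} {L : ℝ}
    (hf : ∀ x y, ‖f x - f y‖ ≤ L * ‖x - y‖) : 0 ≤ L := by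
  obtain ⟨x, y, hxy⟩ := exists_pair_ne E
  exact nonneg_of_mul_nonneg_left ((norm_nonneg _).trans (hf x y))
    (norm_pos_iff.2 (sub_ne_zero.2 hxy))

theorem dist_le_prod_mul_dist_of_forall_dist_pred_le {X : Type*} [PseudoMetricSpace X]
    {x y : ℕ → X} {c : ℕ → ℝ} {n : ℕ} (hc : ∀ k ∈ Icc 1 n, 0 ≤ c k)
    (hstep : ∀ k ∈ Icc 1 n, dist (x (k - 1)) (y (k - 1)) ≤ c k * dist (x k) (y k)) :
    dist (x 0) (y 0) ≤ (∏ k ∈ Icc 1 n, c k) * dist (x n) (y n) := by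
  induction n with
  | zero => simp
  | succ m ih =>
    have hsub : Icc 1 m ⊆ Icc 1 (m + 1) := Icc_subset_Icc_right m.le_succ
    have htop : m + 1 ∈ Icc 1 (m + 1) := mem_Icc.2 ⟨m.succ_pos, le_rfl⟩
    calc dist (x 0) (y 0)
        ≤ (∏ k ∈ Icc 1 m, c k) * dist (x m) (y m) :=
          ih (fun k hk => hc k (hsub hk)) (fun k hk => hstep k (hsub hk))
      _ ≤ (∏ k ∈ Icc 1 m, c k) * (c (m + 1) * dist (x (m + 1)) (y (m + 1))) := by
          gcongr
          · exact prod_nonneg fun k hk => hc k (hsub hk)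
          · exact hstep (m + 1) htop
      _ = (∏ k ∈ Icc 1 (m + 1), c k) * dist (x (m + 1)) (y (m + 1)) := by
          rw [prod_Icc_succ_top m.succ_pos]
          ring

section MeanMap

variable {E : Type*} [SeminormedAddCommGroup E] [NormedSpace ℝ E] {f : E → E} {L : ℝ}

theorem norm_smul_sub_smul_sub_le (hf : ∀ x y, ‖f x - f y‖ ≤ L * ‖x - y‖) {a b : ℝ}
    (ha : 0 ≤ a) (hb : 0 ≤ b) (x y : E) :
    ‖a • (x - b • f x) - a • (y - b • f y)‖ ≤ a * (1 + b * L) * ‖x - y‖ := by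
  have hsplit : a • (x - b • f x) - a • (y - b • f y) = a • ((x - y) - b • (f x - f y)) := by
    rw [← smul_sub, smul_sub b]
    abel_nf
  calc ‖a • (x - b • f x) - a • (y - b • f y)‖
      = a * ‖(x - y) - b • (f x - f y)‖ := by
        rw [hsplit, norm_smul, Real.norm_of_nonneg ha]
    _ ≤ a * (‖x - y‖ + b * (L * ‖x - y‖)) := by
        gcongr
        refine (norm_sub_le _ _).trans ?_
        rw [norm_smul, Real.norm_of_nonneg hb]
        gcongr
        exact hf x y
    _ = a * (1 + b * L) * ‖x - y‖ := by ring

theorem norm_ddpm_mean_sub_le (hf : ∀ x y, ‖f x - f y‖ ≤ L * ‖x - y‖) {a b s : ℝ}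
    (ha : 0 < a) (hb : 0 ≤ b) (hs : 0 < s) (x y : E) :
    ‖(1 / √a) • (x - (b / √s) • f x) - (1 / √a) • (y - (b / √s) • f y)‖ ≤
      (√s + b * L) / √(a * s) * ‖x - y‖ := by
  refine (norm_smul_sub_smul_sub_le hf (by positivity) (by positivity) x y).trans_eq ?_
  have : 0 < √a := Real.sqrt_pos.2 ha
  have : 0 < √s := Real.sqrt_pos.2 hs
  rw [Real.sqrt_mul ha.le]
  field_simp

end MeanMap

theorem rti_dp_local_contractivity_general
    {E : Type*} [NormedAddCommGroup E] [NormedSpace ℝ E]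
    (K' : ℕ) (α : ℕ → ℝ) (L : ℝ)
    (hα : ∀ k ∈ Finset.Icc 1 K', α k ∈ Set.Ioo (0 : ℝ) 1)
    (β : ℕ → ℝ) (hβ : ∀ k, β k = 1 - α k)
    (αbar : ℕ → ℝ)
    (hαbar01 : ∀ k ∈ Finset.Icc 1 K', αbar k ∈ Set.Ioo (0 : ℝ) 1)
    (εθ : E → ℕ → E)
    (hLip : ∀ k, ∀ A B : E, ‖εθ A k - εθ B k‖ ≤ L * ‖A - B‖)
    (μ : ℕ → E → E)
    (hμ : ∀ k (A : E), μ k A =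
      (1 / Real.sqrt (α k)) • (A - (β k / Real.sqrt (1 - αbar k)) • εθ A k))
    (c : ℕ → ℝ)
    (hc : ∀ k, c k =
      (Real.sqrt (1 - αbar k) + β k * L) / Real.sqrt (α k * (1 - αbar k)))
    (σ : ℕ → ℝ) (Y : ℕ → E) (Atil A : ℕ → E)
    (hAtil : ∀ k ∈ Finset.Icc 1 K', Atil (k - 1) = μ k (Atil k) + σ k • Y k)
    (hA : ∀ k ∈ Finset.Icc 1 K', A (k - 1) = μ k (A k) + σ k • Y k) :
    ‖Atil 0 - A 0‖ ≤ (∏ k ∈ Finset.Icc 1 K', c k) * ‖Atil K' - A K'‖ := by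
  rcases subsingleton_or_nontrivial E with hE | hE
  · simp [Subsingleton.elim (Atil 0) (A 0), Subsingleton.elim (Atil K') (A K')]
  have hL : 0 ≤ L := nonneg_of_forall_norm_sub_le_mul (hLip 0)
  have hβ_nonneg : ∀ k ∈ Icc 1 K', 0 ≤ β k := fun k hk => by
    rw [hβ]
    linarith [(hα k hk).2]
  simp only [← dist_eq_norm]
  refine dist_le_prod_mul_dist_of_forall_dist_pred_le (fun k hk => ?_) (fun k hk => ?_)
  · have := hβ_nonneg k hk
    rw [hc]
    positivity
  · rw [hAtil k hk, hA k hk, dist_add_right, dist_eq_norm, hμ, hμ, hc, dist_eq_norm]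
    exact norm_ddpm_mean_sub_le (hLip k) (hα k hk).1 (hβ_nonneg k hk)
      (sub_pos.2 (hαbar01 k hk).2) _ _

/-- **Local Contractivity in RTI-DP** (deterministic, coupled-noise form).
Two reverse DDPM chains run from step `K'` down to `0` with the same noise
realizations satisfy `‖Ã₀ − A₀‖ ≤ (∏ₖ cₖ) ‖Ã_{K'} − A_{K'}‖`, where
`cₖ = (√(1−ᾱₖ) + βₖ L)/√(αₖ (1−ᾱₖ))`. -/
theorem rti_dp_local_contractivity
    {E : Type*} [NormedAddCommGroup E] [NormedSpace ℝ E]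
    (K' : ℕ) (α : ℕ → ℝ) (L : ℝ)
    (hα : ∀ k ∈ Finset.Icc 1 K', α k ∈ Set.Ioo (0 : ℝ) 1)
    (β : ℕ → ℝ) (hβ : ∀ k, β k = 1 - α k)
    (αbar : ℕ → ℝ) (hαbar : ∀ k, αbar k = ∏ s ∈ Finset.Icc 1 k, α s)
    (hαbar01 : ∀ k ∈ Finset.Icc 1 K', αbar k ∈ Set.Ioo (0 : ℝ) 1)
    (εθ : E → ℕ → E)
    (hLip : ∀ k, ∀ A B : E, ‖εθ A k - εθ B k‖ ≤ L * ‖A - B‖)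
    (μ : ℕ → E → E)
    (hμ : ∀ k (A : E), μ k A =
      (1 / Real.sqrt (α k)) • (A - (β k / Real.sqrt (1 - αbar k)) • εθ A k))
    (c : ℕ → ℝ)
    (hc : ∀ k, c k =
      (Real.sqrt (1 - αbar k) + β k * L) / Real.sqrt (α k * (1 - αbar k)))
    (σ : ℕ → ℝ) (Y : ℕ → E) (Atil A : ℕ → E)
    (hAtil : ∀ k ∈ Finset.Icc 1 K', Atil (k - 1) = μ k (Atil k) + σ k • Y k)
    (hA : ∀ k ∈ Finset.Icc 1 K', A (k - 1) = μ k (A k) + σ k • Y k) :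
    ‖Atil 0 - A 0‖ ≤ (∏ k ∈ Finset.Icc 1 K', c k) * ‖Atil K' - A K'‖ :=
  rti_dp_local_contractivity_general K' α L hα β hβ αbar hαbar01 εθ hLip μ hμ c hc σ Y Atil A hAtil
    hA
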